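/- Let G be a bi-valued symmetric multigraph with edge weights α > β ≥ 0, and let K be a non-trivial heavy component of G whose heavy edges induce a non-odd multitree (some pair of adjacent vertices is joined by an even number of heavy edges). Then there exist a partial envy-free orientation π of K and two distinct vertices v, w of K such that: (1) u_i(π_i) ≥ α for every vertex i of K; (2) all edges between v and w are oriented by π except possibly one light edge; (3) π is privately envy-free between v and w; and (4) at most one edge is oriented between each pair of vertices other than the pair {v, w}. -/

import Mathlib

/-!
Choose adjacent vertices `a, b` of `K` joined by `2k > 0` heavy edges. Give `k` of these heavy
edges to each of `a` and `b`, and split the light `a`–`b` edges between them in two halves of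
equal size, leaving at most one light edge unassigned; then `a` and `b` are privately envy-free
and each receives at least `α`. Every other vertex `u` of `K` receives one heavy edge joining it
to a vertex strictly closer to `a` in the heavy graph. Since the distance to `a` strictly
decreases along these edges, no two of them are parallel. So every such `u` gets exactly `α`,
which is the most any single edge is worth to anyone, and it values the bundles of `a` and `b`
at `0`.
-/

/-- Bundle of an agent under a partial orientation. -/
def bundleP {V E : Type*} [Fintype E] [DecidableEq V] [DecidableEq E]
    (π : E → Option V) (i : V) : Finset E :=
  Finset.univ.filter (fun e => π e = some i)

/-- Additive utility: an agent values an edge at its weight iff incident. -/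
def util {V E : Type*} [DecidableEq V] (ends : E → V × V) (w : E → ℝ)
    (i : V) (S : Finset E) : ℝ :=
  ∑ e ∈ S, if (ends e).1 = i ∨ (ends e).2 = i then w e else 0

/-- The set of (non-loop) edges between two distinct vertices. -/
def edgesBetween {V E : Type*} [Fintype E] [DecidableEq V] [DecidableEq E]
    (ends : E → V × V) (i j : V) : Finset E :=
  Finset.univ.filter (fun e => ends e = (i, j) ∨ ends e = (j, i))

/-- Reachability by paths of heavy edges. -/
def heavyReach {V E : Type*} (ends : E → V × V) (heavy : E → Bool) : V → V → Prop :=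
  Relation.ReflTransGen (fun a b => ∃ e, heavy e = true ∧ (ends e = (a, b) ∨ ends e = (b, a)))

/-- The simple graph obtained by condensing the heavy edges. -/
def heavyGraph {V E : Type*} (ends : E → V × V) (heavy : E → Bool) : SimpleGraph V where
  Adj a b := a ≠ b ∧ ∃ e, heavy e = true ∧ (ends e = (a, b) ∨ ends e = (b, a))
  symm := ⟨by
    rintro a b ⟨hab, e, he, h⟩
    exact ⟨hab.symm, e, he, h.symm⟩⟩
  loopless := ⟨by rintro a ⟨ha, -⟩; exact ha rfl⟩

/-- Two edges join the same pair of vertices (are parallel). -/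
def samePair {V E : Type*} (ends : E → V × V) (e e' : E) : Prop :=
  ends e = ends e' ∨ ends e = (ends e').swap

open Finset

section Utility

variable {V E : Type*}

def Incident (ends : E → V × V) (i : V) (e : E) : Prop :=
  (ends e).1 = i ∨ (ends e).2 = i

variable [DecidableEq V] {ends : E → V × V} {w : E → ℝ} {i : V} {S T : Finset E}

lemma util_eq_zero (h : ∀ e ∈ S, ¬Incident ends i e) : util ends w i S = 0 :=
  sum_eq_zero fun e he => if_neg (h e he)

lemma util_nonneg (hw : ∀ e, 0 ≤ w e) : 0 ≤ util ends w i S :=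
  sum_nonneg fun e _ => by split_ifs <;> simp [hw e]

lemma util_union [DecidableEq E] (h : Disjoint S T) :
    util ends w i (S ∪ T) = util ends w i S + util ends w i T :=
  sum_union h

lemma util_eq_card_mul {c : ℝ} (h : ∀ e ∈ S, Incident ends i e ∧ w e = c) :
    util ends w i S = #S * c := by
  rw [util, sum_congr rfl fun e he => (if_pos (show (ends e).1 = i ∨ (ends e).2 = i from
    (h e he).1)).trans (h e he).2, sum_const, nsmul_eq_mul]

lemma util_le_of_card_le_one {c : ℝ} (hS : #S ≤ 1) (hw : ∀ e, w e ≤ c) (hc : 0 ≤ c) :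
    util ends w i S ≤ c :=
  calc util ends w i S ≤ ∑ _e ∈ S, c := sum_le_sum fun e _ => by split_ifs; exacts [hw e, hc]
    _ = #S * c := by rw [sum_const, nsmul_eq_mul]
    _ ≤ 1 * c := by gcongr; exact_mod_cast hS
    _ = c := one_mul c

lemma util_union_eq_card_mul_add [DecidableEq E] {heavy : E → Bool} {α β : ℝ}
    (hw : ∀ e, w e = if heavy e then α else β)
    (hS : ∀ e ∈ S, Incident ends i e ∧ heavy e = true)
    (hT : ∀ e ∈ T, Incident ends i e ∧ heavy e = false) :
    util ends w i (S ∪ T) = #S * α + #T * β := by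
  have hST : Disjoint S T := disjoint_left.2 fun e heS heT => by
    simpa [(hS e heS).2] using (hT e heT).2
  rw [util_union hST,
    util_eq_card_mul (c := α) fun e he => ⟨(hS e he).1, by simp [hw, (hS e he).2]⟩,
    util_eq_card_mul (c := β) fun e he => ⟨(hT e he).1, by simp [hw, (hT e he).2]⟩]

end Utility

section EdgesBetween

variable {V E : Type*} [Fintype E] [DecidableEq V] [DecidableEq E] {ends : E → V × V}
  {a b v : V} {e e' : E}

@[simp]
lemma mem_edgesBetween : e ∈ edgesBetween ends a b ↔ ends e = (a, b) ∨ ends e = (b, a) := by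
  simp [edgesBetween]

lemma incident_left_of_mem_edgesBetween (he : e ∈ edgesBetween ends a b) : Incident ends a e := by
  rcases mem_edgesBetween.1 he with h | h <;> simp [Incident, h]

lemma incident_right_of_mem_edgesBetween (he : e ∈ edgesBetween ends a b) :
    Incident ends b e := by
  rcases mem_edgesBetween.1 he with h | h <;> simp [Incident, h]

lemma eq_or_eq_of_incident_of_mem_edgesBetween (he : e ∈ edgesBetween ends a b)
    (hv : Incident ends v e) : v = a ∨ v = b := by
  rcases mem_edgesBetween.1 he with h | h <;> rcases hv with hv | hv <;> simp_all [eq_comm]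

lemma mem_edgesBetween_of_samePair (he' : e' ∈ edgesBetween ends a b) (h : samePair ends e e') :
    e ∈ edgesBetween ends a b := by
  rcases mem_edgesBetween.1 he' with h' | h' <;> rcases h with h | h <;> simp [h, h']

lemma ends_mem_of_mem_edgesBetween {K : Finset V} (he : e ∈ edgesBetween ends a b) (ha : a ∈ K)
    (hb : b ∈ K) : (ends e).1 ∈ K ∧ (ends e).2 ∈ K := by
  rcases mem_edgesBetween.1 he with h | h <;> simp [h, ha, hb]

end EdgesBetween

section ParentEdge

variable {V E : Type*} {ends : E → V × V} {heavy : E → Bool} {a u u' x y : V} {e e' : E}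

/-- The edge from `u` to its parent in a breadth-first tree of the heavy graph rooted at `a`. -/
def IsParentEdge (ends : E → V × V) (heavy : E → Bool) (a u : V) (e : E) : Prop :=
  heavy e = true ∧ ∃ z, (ends e = (u, z) ∨ ends e = (z, u)) ∧
    (heavyGraph ends heavy).dist z a < (heavyGraph ends heavy).dist u a

lemma heavyReach.reachable (h : heavyReach ends heavy x y) :
    (heavyGraph ends heavy).Reachable x y := by
  induction h with
  | refl => rfl
  | @tail p q _ hpq ih =>
    obtain ⟨e, he, hE⟩ := hpq
    by_cases hne : p = q
    · exact hne ▸ ih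
    · exact ih.trans (SimpleGraph.Adj.reachable ⟨hne, e, he, hE⟩)

lemma exists_isParentEdge (h : heavyReach ends heavy u a) (hua : u ≠ a) :
    ∃ e, IsParentEdge ends heavy a u e := by
  obtain ⟨p, hp⟩ := h.reachable.exists_walk_length_eq_dist
  revert hp
  cases p with
  | nil => exact absurd rfl hua
  | cons hadj q =>
    intro hp
    rw [SimpleGraph.Walk.length_cons] at hp
    obtain ⟨-, e, he, hE⟩ := hadj
    refine ⟨e, he, _, hE, ?_⟩
    have := SimpleGraph.dist_le q
    omega

lemma IsParentEdge.incident (he : IsParentEdge ends heavy a u e) : Incident ends u e := by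
  obtain ⟨-, z, hz | hz, -⟩ := he <;> simp [Incident, hz]

lemma IsParentEdge.eq_of_samePair (he : IsParentEdge ends heavy a u e)
    (he' : IsParentEdge ends heavy a u' e') (h : samePair ends e e') : u = u' := by
  obtain ⟨-, z, hz, hd⟩ := he
  obtain ⟨-, z', hz', hd'⟩ := he'
  have : (u = u' ∧ z = z') ∨ (u = z' ∧ z = u') := by
    rcases hz with hz | hz <;> rcases hz' with hz' | hz' <;> rcases h with h | h <;>
      simp only [hz, hz', Prod.swap_prod_mk, Prod.mk.injEq] at h <;> tauto
  rcases this with ⟨rfl, -⟩ | ⟨rfl, rfl⟩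
  · rfl
  · omega

lemma IsParentEdge.ends_mem (he : IsParentEdge ends heavy a u e) {K : Finset V}
    (hK : ∀ x ∈ K, ∀ y, heavyReach ends heavy x y → y ∈ K) (hu : u ∈ K) :
    (ends e).1 ∈ K ∧ (ends e).2 ∈ K := by
  obtain ⟨hh, z, hz, -⟩ := he
  have hzK := hK u hu z (.single ⟨e, hh, hz⟩)
  rcases hz with hz | hz <;> simp [hz, hu, hzK]

end ParentEdge

section Orientation

variable {V E : Type*} {T : V → Finset E} {e : E} {v : V}

open Classical in
noncomputable def orientationOf (T : V → Finset E) (e : E) : Option V :=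
  if h : ∃ v, e ∈ T v then some h.choose else none

lemma orientationOf_eq_none : orientationOf T e = none ↔ ∀ v, e ∉ T v := by
  unfold orientationOf
  split_ifs with h <;> simp_all

variable [Fintype E] [DecidableEq V] [DecidableEq E] {π : E → Option V}

@[simp]
lemma mem_bundleP : e ∈ bundleP π v ↔ π e = some v := by
  simp [bundleP]

lemma exists_mem_bundleP_of_ne_none (h : π e ≠ none) : ∃ v, e ∈ bundleP π v := by
  obtain ⟨v, hv⟩ := Option.ne_none_iff_exists'.1 h
  exact ⟨v, mem_bundleP.2 hv⟩

lemma bundleP_orientationOf (hT : Pairwise fun v v' => Disjoint (T v) (T v')) (v : V) :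
    bundleP (orientationOf T) v = T v := by
  ext e
  rw [mem_bundleP, orientationOf]
  split_ifs with h
  · rw [Option.some_inj]
    refine ⟨fun hv => hv ▸ h.choose_spec, fun he => ?_⟩
    by_contra hne
    exact disjoint_left.1 (hT hne) h.choose_spec he
  · simp only [false_iff]
    exact fun he => h ⟨v, he⟩

end Orientation

lemma Finset.exists_disjoint_halves {ι : Type*} [DecidableEq ι] (s : Finset ι) :
    ∃ A B, Disjoint A B ∧ A ∪ B ⊆ s ∧ #A = #B ∧ #(s \ (A ∪ B)) = #s % 2 := by
  obtain ⟨A, hA, hAc⟩ := exists_subset_card_eq (Nat.div_le_self #s 2)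
  obtain ⟨B, hB, hBc⟩ := exists_subset_card_eq
    (show #s / 2 ≤ #(s \ A) by rw [card_sdiff_of_subset hA]; omega)
  have hBs : B ⊆ s := hB.trans sdiff_subset
  have hAB : Disjoint A B := disjoint_of_subset_right hB disjoint_sdiff
  refine ⟨A, B, hAB, union_subset hA hBs, hAc.trans hBc.symm, ?_⟩
  rw [card_sdiff_of_subset (union_subset hA hBs), card_union_of_disjoint hAB]
  omega

section BalancedSplit

variable {V E : Type*} [Fintype E] [DecidableEq V] [DecidableEq E]

structure IsBalancedSplit (ends : E → V × V) (heavy : E → Bool) (w : E → ℝ) (α : ℝ) (a b : V)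
    (A B : Finset E) : Prop where
  disjoint : Disjoint A B
  left_subset : A ⊆ edgesBetween ends a b
  right_subset : B ⊆ edgesBetween ends a b
  card_rest_le_one : #(edgesBetween ends a b \ (A ∪ B)) ≤ 1
  rest_light : ∀ e ∈ edgesBetween ends a b \ (A ∪ B), heavy e = false
  util_left : util ends w a A = util ends w a B
  util_right : util ends w b A = util ends w b B
  le_util_left : α ≤ util ends w a A
  le_util_right : α ≤ util ends w b B

lemma exists_isBalancedSplit {ends : E → V × V} {heavy : E → Bool} {w : E → ℝ} {α β : ℝ}
    {a b : V} (hw : ∀ e, w e = if heavy e then α else β) (hα : 0 ≤ α) (hβ : 0 ≤ β)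
    (hpos : 0 < #{e ∈ edgesBetween ends a b | heavy e = true})
    (heven : Even #{e ∈ edgesBetween ends a b | heavy e = true}) :
    ∃ A B, IsBalancedSplit ends heavy w α a b A B := by
  set EB := edgesBetween ends a b
  set H := {e ∈ EB | heavy e = true}
  set L := {e ∈ EB | heavy e = false}
  obtain ⟨Ha, Hb, hHd, hHs, hHc, hHr⟩ := exists_disjoint_halves H
  obtain ⟨La, Lb, hLd, hLs, hLc, hLr⟩ := exists_disjoint_halves L
  have hH : Ha ∪ Hb = H := by
    rw [Nat.even_iff.1 heven, card_eq_zero, sdiff_eq_empty_iff_subset] at hHr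
    exact hHs.antisymm hHr
  have hHL : Disjoint H L := disjoint_filter.2 fun e _ h1 h2 => by simp_all
  have hvalue : ∀ i, (∀ e ∈ EB, Incident ends i e) → ∀ X ⊆ H, ∀ Y ⊆ L,
      util ends w i (X ∪ Y) = #X * α + #Y * β := fun i hi X hX Y hY =>
    util_union_eq_card_mul_add hw
      (fun e he => ⟨hi e (filter_subset _ _ (hX he)), (mem_filter.1 (hX he)).2⟩)
      (fun e he => ⟨hi e (filter_subset _ _ (hY he)), (mem_filter.1 (hY he)).2⟩)
  have hrest : EB \ (Ha ∪ La ∪ (Hb ∪ Lb)) ⊆ L \ (La ∪ Lb) := by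
    intro e he
    simp only [mem_sdiff, mem_union, not_or] at he
    have heL : e ∈ L := mem_filter.2 ⟨he.1, by
      by_contra hh
      have : e ∈ Ha ∪ Hb := hH ▸ mem_filter.2 ⟨he.1, by simpa using hh⟩
      rcases mem_union.1 this with h | h
      exacts [he.2.1.1 h, he.2.2.1 h]⟩
    simp [heL, he.2]
  have hHa : 0 < #Ha := by
    have := card_union_of_disjoint hHd
    rw [hH] at this
    omega
  have hαle : α ≤ #Ha * α + #La * β := by
    have : (1 : ℝ) ≤ #Ha := by exact_mod_cast hHa
    nlinarith [mul_nonneg (Nat.cast_nonneg (α := ℝ) #La) hβ]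
  have hHaH : Ha ⊆ H := subset_union_left.trans hHs
  have hHbH : Hb ⊆ H := subset_union_right.trans hHs
  have hLaL : La ⊆ L := subset_union_left.trans hLs
  have hLbL : Lb ⊆ L := subset_union_right.trans hLs
  have hva := hvalue a fun e he => incident_left_of_mem_edgesBetween he
  have hvb := hvalue b fun e he => incident_right_of_mem_edgesBetween he
  refine ⟨Ha ∪ La, Hb ∪ Lb, ⟨?_, ?_, ?_, ?_, ?_, ?_, ?_, ?_, ?_⟩⟩
  · simp only [disjoint_union_left, disjoint_union_right]
    exact ⟨⟨hHd, hHL.symm.mono hLaL hHbH⟩, ⟨hHL.mono hHaH hLbL, hLd⟩⟩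
  · exact union_subset (hHaH.trans (filter_subset _ _)) (hLaL.trans (filter_subset _ _))
  · exact union_subset (hHbH.trans (filter_subset _ _)) (hLbL.trans (filter_subset _ _))
  · exact (card_le_card hrest).trans (by omega)
  · exact fun e he => (mem_filter.1 (mem_sdiff.1 (hrest he)).1).2
  · rw [hva _ hHaH _ hLaL, hva _ hHbH _ hLbL, hHc, hLc]
  · rw [hvb _ hHaH _ hLaL, hvb _ hHbH _ hLbL, hHc, hLc]
  · rwa [hva _ hHaH _ hLaL]
  · rwa [hvb _ hHbH _ hLbL, ← hHc, ← hLc]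

end BalancedSplit

section TreeBundles

variable {V E : Type*} [DecidableEq V] (K : Finset V) (a b : V) (A B : Finset E) (pe : V → E)

def treeBundles (v : V) : Finset E :=
  if v = a then A else if v = b then B else if v ∈ K then {pe v} else ∅

variable {K a b A B pe} {v v' : V} {e e' : E}

lemma mem_treeBundles : e ∈ treeBundles K a b A B pe v ↔
    (v = a ∧ e ∈ A) ∨ (v ≠ a ∧ v = b ∧ e ∈ B) ∨ (v ≠ a ∧ v ≠ b ∧ v ∈ K ∧ e = pe v) := by
  unfold treeBundles
  split_ifs <;> simp_all

lemma treeBundles_left : treeBundles K a b A B pe a = A := if_pos rfl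

lemma treeBundles_right (hab : a ≠ b) : treeBundles K a b A B pe b = B := by
  simp [treeBundles, hab.symm]

lemma card_treeBundles_le_one (hva : v ≠ a) (hvb : v ≠ b) :
    #(treeBundles K a b A B pe v) ≤ 1 := by
  unfold treeBundles
  split_ifs <;> simp_all

variable [Fintype E] [DecidableEq E] {ends : E → V × V} {heavy : E → Bool}
  (hA : A ⊆ edgesBetween ends a b) (hB : B ⊆ edgesBetween ends a b)
  (hpe : ∀ u ∈ K, u ≠ a → IsParentEdge ends heavy a u (pe u))
include hA hB

lemma treeBundles_subset_edgesBetween (hv : v = a ∨ v = b) :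
    treeBundles K a b A B pe v ⊆ edgesBetween ends a b := by
  intro e he
  rcases mem_treeBundles.1 he with ⟨-, he⟩ | ⟨-, -, he⟩ | ⟨hva, hvb, -⟩
  exacts [hA he, hB he, (hv.elim hva hvb).elim]

include hpe

lemma incident_of_mem_treeBundles (he : e ∈ treeBundles K a b A B pe v) :
    Incident ends v e := by
  rcases mem_treeBundles.1 he with ⟨rfl, heA⟩ | ⟨-, rfl, heB⟩ | ⟨hva, -, hvK, rfl⟩
  · exact incident_left_of_mem_edgesBetween (hA heA)
  · exact incident_right_of_mem_edgesBetween (hB heB)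
  · exact (hpe v hvK hva).incident

lemma eq_of_mem_treeBundles_of_samePair (he : e ∈ treeBundles K a b A B pe v)
    (he' : e' ∈ treeBundles K a b A B pe v') (h : samePair ends e e') (hva : v ≠ a)
    (hvb : v ≠ b) : v = v' ∧ e = e' := by
  have hinc := incident_of_mem_treeBundles hA hB hpe he
  obtain ⟨hvK, rfl⟩ : v ∈ K ∧ e = pe v := by simpa [hva, hvb] using mem_treeBundles.1 he
  by_cases hv' : v' = a ∨ v' = b
  · have := mem_edgesBetween_of_samePair (treeBundles_subset_edgesBetween hA hB hv' he') h
    exact ((eq_or_eq_of_incident_of_mem_edgesBetween this hinc).elim hva hvb).elim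
  · rw [not_or] at hv'
    obtain ⟨hv'K, rfl⟩ : v' ∈ K ∧ e' = pe v' := by simpa [hv'] using mem_treeBundles.1 he'
    obtain rfl := (hpe v hvK hva).eq_of_samePair (hpe v' hv'K hv'.1) h
    exact ⟨rfl, rfl⟩

lemma pairwise_disjoint_treeBundles (hAB : Disjoint A B) (hab : a ≠ b) :
    Pairwise fun v v' => Disjoint (treeBundles K a b A B pe v) (treeBundles K a b A B pe v') := by
  intro v v' hne
  refine disjoint_left.2 fun e he he' => ?_
  by_cases hv : v = a ∨ v = b
  · by_cases hv' : v' = a ∨ v' = b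
    · rcases hv with rfl | rfl <;> rcases hv' with rfl | rfl
      · exact hne rfl
      · rw [treeBundles_left] at he
        rw [treeBundles_right hab] at he'
        exact disjoint_left.1 hAB he he'
      · rw [treeBundles_right hab] at he
        rw [treeBundles_left] at he'
        exact disjoint_left.1 hAB he' he
      · exact hne rfl
    · rw [not_or] at hv'
      exact hne (eq_of_mem_treeBundles_of_samePair hA hB hpe he' he (Or.inl rfl) hv'.1 hv'.2
        ).1.symm
  · rw [not_or] at hv
    exact hne (eq_of_mem_treeBundles_of_samePair hA hB hpe he he' (Or.inl rfl) hv.1 hv.2).1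

lemma mem_edgesBetween_of_mem_treeBundles_of_samePair (he : e ∈ treeBundles K a b A B pe v)
    (he' : e' ∈ treeBundles K a b A B pe v') (h : samePair ends e e') (hne : e ≠ e') :
    e ∈ edgesBetween ends a b := by
  by_cases hv : v = a ∨ v = b
  · exact treeBundles_subset_edgesBetween hA hB hv he
  · rw [not_or] at hv
    exact (hne (eq_of_mem_treeBundles_of_samePair hA hB hpe he he' h hv.1 hv.2).2).elim

lemma ends_mem_of_mem_treeBundles (hK : ∀ x ∈ K, ∀ y, heavyReach ends heavy x y → y ∈ K)
    (ha : a ∈ K) (hb : b ∈ K) (he : e ∈ treeBundles K a b A B pe v) :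
    (ends e).1 ∈ K ∧ (ends e).2 ∈ K := by
  by_cases hv : v = a ∨ v = b
  · exact ends_mem_of_mem_edgesBetween (treeBundles_subset_edgesBetween hA hB hv he) ha hb
  · rw [not_or] at hv
    obtain ⟨hvK, rfl⟩ : v ∈ K ∧ e = pe v := by simpa [hv] using mem_treeBundles.1 he
    exact (hpe v hvK hv.1).ends_mem hK hvK

lemma filter_orientationOf_treeBundles_eq_none (hab : a ≠ b) :
    {e ∈ edgesBetween ends a b | orientationOf (treeBundles K a b A B pe) e = none} =
      edgesBetween ends a b \ (A ∪ B) := by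
  ext e
  simp only [mem_filter, mem_sdiff, orientationOf_eq_none]
  refine ⟨fun ⟨he, h⟩ => ⟨he, fun heAB => ?_⟩, fun ⟨he, heAB⟩ => ⟨he, fun v hv => ?_⟩⟩
  · rcases mem_union.1 heAB with heA | heB
    · exact h a (by rwa [treeBundles_left])
    · exact h b (by rwa [treeBundles_right hab])
  · rcases mem_treeBundles.1 hv with ⟨-, heA⟩ | ⟨-, -, heB⟩ | ⟨hva, hvb, -⟩
    · exact heAB (mem_union_left _ heA)
    · exact heAB (mem_union_right _ heB)
    · have hinc := incident_of_mem_treeBundles hA hB hpe hv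
      exact (eq_or_eq_of_incident_of_mem_edgesBetween he hinc).elim hva hvb

end TreeBundles

section EnvyFree

variable {V E : Type*} [Fintype E] [DecidableEq V] [DecidableEq E] {ends : E → V × V}
  {heavy : E → Bool} {w : E → ℝ} {α : ℝ} {K : Finset V} {a b : V} {A B : Finset E} {pe : V → E}
  (hS : IsBalancedSplit ends heavy w α a b A B) (hab : a ≠ b)
  (hpe : ∀ u ∈ K, u ≠ a → IsParentEdge ends heavy a u (pe u))
  (hw_heavy : ∀ e, heavy e = true → w e = α)
include hS hab hpe hw_heavy

lemma le_util_treeBundles_self {i : V} (hi : i ∈ K) :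
    α ≤ util ends w i (treeBundles K a b A B pe i) := by
  by_cases hia : i = a
  · subst hia
    rw [treeBundles_left]
    exact hS.le_util_left
  by_cases hib : i = b
  · subst hib
    rw [treeBundles_right hab]
    exact hS.le_util_right
  have hpi := hpe i hi hia
  rw [show treeBundles K a b A B pe i = {pe i} by simp [treeBundles, hia, hib, hi],
    util_eq_card_mul (c := α) (by simpa using ⟨hpi.incident, hw_heavy _ hpi.1⟩)]
  simp

lemma util_treeBundles_le_self (hK : ∀ x ∈ K, ∀ y, heavyReach ends heavy x y → y ∈ K)
    (ha : a ∈ K) (hb : b ∈ K) (hw0 : ∀ e, 0 ≤ w e) (hwα : ∀ e, w e ≤ α) (i j : V) :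
    util ends w i (treeBundles K a b A B pe j) ≤ util ends w i (treeBundles K a b A B pe i) := by
  have hA := hS.left_subset
  have hB := hS.right_subset
  by_cases hinc : ∃ e ∈ treeBundles K a b A B pe j, Incident ends i e
  swap
  · simp only [not_exists, not_and] at hinc
    rw [util_eq_zero hinc]
    exact util_nonneg hw0
  obtain ⟨e, he, hie⟩ := hinc
  have hiK : i ∈ K := by
    obtain ⟨h1, h2⟩ := ends_mem_of_mem_treeBundles hA hB hpe hK ha hb he
    rcases hie with rfl | rfl
    exacts [h1, h2]
  by_cases hj : j = a ∨ j = b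
  · have hi := eq_or_eq_of_incident_of_mem_edgesBetween
      (treeBundles_subset_edgesBetween hA hB hj he) hie
    rcases hi with rfl | rfl <;> rcases hj with rfl | rfl <;>
      simp only [treeBundles_left, treeBundles_right hab, hS.util_left, hS.util_right, le_refl]
  · rw [not_or] at hj
    have hα : 0 ≤ α := (hw0 e).trans (hwα e)
    calc util ends w i (treeBundles K a b A B pe j) ≤ α :=
          util_le_of_card_le_one (card_treeBundles_le_one hj.1 hj.2) hwα hα
      _ ≤ _ := le_util_treeBundles_self hS hab hpe hw_heavy hiK

end EnvyFree

theorem stmt8_general {V E : Type*} [Fintype E] [DecidableEq V] [DecidableEq E]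
    (ends : E → V × V) (heavy : E → Bool) (α β : ℝ) (hβ : 0 ≤ β) (hαβ : β < α)
    (w : E → ℝ) (hw : ∀ e, w e = if heavy e then α else β)
    (K : Finset V)
    -- K is a heavy component:
    (hconn : ∀ a ∈ K, ∀ b ∈ K, heavyReach ends heavy a b)
    (hmax : ∀ a ∈ K, ∀ b, heavyReach ends heavy a b → b ∈ K)
    -- the multitree is non-odd: some adjacent pair of K is joined by a
    -- (positive) even number of heavy edges:
    (hnonodd : ∃ a ∈ K, ∃ b ∈ K, a ≠ b ∧
        0 < ((edgesBetween ends a b).filter (fun e => heavy e = true)).card ∧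
        Even ((edgesBetween ends a b).filter (fun e => heavy e = true)).card) :
    ∃ π : E → Option V, ∃ v ∈ K, ∃ w' ∈ K, v ≠ w' ∧
      -- π is a partial orientation of K:
      (∀ e u, π e = some u → u = (ends e).1 ∨ u = (ends e).2) ∧
      (∀ e, π e ≠ none → (ends e).1 ∈ K ∧ (ends e).2 ∈ K) ∧
      -- π is envy-free:
      (∀ i j : V, util ends w i (bundleP π j) ≤ util ends w i (bundleP π i)) ∧
      -- (1) every vertex of K receives utility at least α:
      (∀ i ∈ K, α ≤ util ends w i (bundleP π i)) ∧
      -- (2) all edges between v and w' are oriented except possibly one light: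
      (((edgesBetween ends v w').filter (fun e => π e = none)).card ≤ 1) ∧
      (∀ e ∈ edgesBetween ends v w', π e = none → heavy e = false) ∧
      -- (3) π is PEF between v and w':
      (util ends w v (bundleP π v ∩ edgesBetween ends v w')
        = util ends w v (bundleP π w' ∩ edgesBetween ends v w')) ∧
      (util ends w w' (bundleP π v ∩ edgesBetween ends v w')
        = util ends w w' (bundleP π w' ∩ edgesBetween ends v w')) ∧
      -- (4) at most one edge oriented between each pair other than {v, w'}:
      (∀ e e', π e ≠ none → π e' ≠ none → samePair ends e e' →
        e ≠ e' → e ∈ edgesBetween ends v w') := by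
  obtain ⟨a, ha, b, hb, hab, hpos, heven⟩ := hnonodd
  have : Nonempty E := ⟨(card_pos.1 hpos).choose⟩
  choose! pe hpe using fun u (hu : u ∈ K) (hua : u ≠ a) =>
    exists_isParentEdge (hconn u hu a ha) hua
  have hw0 (e : E) : 0 ≤ w e := by rw [hw]; split <;> linarith
  have hwα (e : E) : w e ≤ α := by rw [hw]; split <;> linarith
  have hw_heavy (e : E) (he : heavy e = true) : w e = α := by rw [hw, if_pos he]
  obtain ⟨A, B, hS⟩ := exists_isBalancedSplit hw (hβ.trans hαβ.le) hβ hpos heven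
  have hA := hS.left_subset
  have hB := hS.right_subset
  set π := orientationOf (treeBundles K a b A B pe)
  have hbundle := bundleP_orientationOf (pairwise_disjoint_treeBundles hA hB hpe hS.disjoint hab)
  have hnone := filter_orientationOf_treeBundles_eq_none hA hB hpe hab
  have hPEF :
      bundleP π a ∩ edgesBetween ends a b = A ∧ bundleP π b ∩ edgesBetween ends a b = B := by
    rw [hbundle, hbundle, treeBundles_left, treeBundles_right hab, inter_eq_left.2 hA,
      inter_eq_left.2 hB]
    exact ⟨rfl, rfl⟩
  refine ⟨π, a, ha, b, hb, hab, fun e u h => ?_, fun e h => ?_, fun i j => ?_, fun i hi => ?_,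
    hnone ▸ hS.card_rest_le_one, fun e he h => hS.rest_light e (hnone ▸ mem_filter.2 ⟨he, h⟩),
    by simpa [hPEF] using hS.util_left, by simpa [hPEF] using hS.util_right,
    fun e e' h h' hsame hne => ?_⟩
  · have hu := hbundle u ▸ mem_bundleP.2 h
    exact (incident_of_mem_treeBundles hA hB hpe hu).imp Eq.symm Eq.symm
  · obtain ⟨v, hv⟩ := exists_mem_bundleP_of_ne_none h
    exact ends_mem_of_mem_treeBundles hA hB hpe hmax ha hb (hbundle v ▸ hv)
  · rw [hbundle, hbundle]
    exact util_treeBundles_le_self hS hab hpe hw_heavy hmax ha hb hw0 hwα i j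
  · rw [hbundle]
    exact le_util_treeBundles_self hS hab hpe hw_heavy hi
  · obtain ⟨v, hv⟩ := exists_mem_bundleP_of_ne_none h
    obtain ⟨v', hv'⟩ := exists_mem_bundleP_of_ne_none h'
    exact mem_edgesBetween_of_mem_treeBundles_of_samePair hA hB hpe (hbundle v ▸ hv)
      (hbundle v' ▸ hv') hsame hne

/-- let `K` be a non-trivial heavy component of a bi-valued
symmetric multigraph whose heavy edges induce a multitree that is non-odd
(some adjacent pair of vertices of `K` is joined by a positive even number of
heavy edges). Then there exist a partial envy-free orientation `π` of `K` and
distinct vertices `v, w` of `K` such that (1) every vertex of `K` receives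
utility at least `α`; (2) all edges between `v` and `w` are oriented except
possibly one light edge; (3) `π` is privately envy-free between `v` and `w`;
and (4) at most one edge is oriented between each pair of vertices other than
the pair `{v, w}`. -/
theorem stmt8 {V E : Type*} [Fintype E] [DecidableEq V] [DecidableEq E]
    (ends : E → V × V) (heavy : E → Bool) (α β : ℝ) (hβ : 0 ≤ β) (hαβ : β < α)
    (w : E → ℝ) (hw : ∀ e, w e = if heavy e then α else β)
    (K : Finset V)
    -- K is a heavy component:
    (hconn : ∀ a ∈ K, ∀ b ∈ K, heavyReach ends heavy a b)
    (hmax : ∀ a ∈ K, ∀ b, heavyReach ends heavy a b → b ∈ K)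
    -- K is non-trivial:
    (hnontriv : ∃ a ∈ K, ∃ b ∈ K, a ≠ b)
    -- the heavy edges of K induce a multitree (no heavy self-loops, and the
    -- condensed heavy graph is acyclic within K):
    (hnoloop : ∀ e v, heavy e = true → ends e = (v, v) → v ∉ K)
    (hacyclic : ∀ v ∈ K, ∀ p : (heavyGraph ends heavy).Walk v v, ¬ p.IsCycle)
    -- the multitree is non-odd: some adjacent pair of K is joined by a
    -- (positive) even number of heavy edges:
    (hnonodd : ∃ a ∈ K, ∃ b ∈ K, a ≠ b ∧
        0 < ((edgesBetween ends a b).filter (fun e => heavy e = true)).card ∧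
        Even ((edgesBetween ends a b).filter (fun e => heavy e = true)).card) :
    ∃ π : E → Option V, ∃ v ∈ K, ∃ w' ∈ K, v ≠ w' ∧
      -- π is a partial orientation of K:
      (∀ e u, π e = some u → u = (ends e).1 ∨ u = (ends e).2) ∧
      (∀ e, π e ≠ none → (ends e).1 ∈ K ∧ (ends e).2 ∈ K) ∧
      -- π is envy-free:
      (∀ i j : V, util ends w i (bundleP π j) ≤ util ends w i (bundleP π i)) ∧
      -- (1) every vertex of K receives utility at least α:
      (∀ i ∈ K, α ≤ util ends w i (bundleP π i)) ∧
      -- (2) all edges between v and w' are oriented except possibly one light: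
      (((edgesBetween ends v w').filter (fun e => π e = none)).card ≤ 1) ∧
      (∀ e ∈ edgesBetween ends v w', π e = none → heavy e = false) ∧
      -- (3) π is PEF between v and w':
      (util ends w v (bundleP π v ∩ edgesBetween ends v w')
        = util ends w v (bundleP π w' ∩ edgesBetween ends v w')) ∧
      (util ends w w' (bundleP π v ∩ edgesBetween ends v w')
        = util ends w w' (bundleP π w' ∩ edgesBetween ends v w')) ∧
      -- (4) at most one edge oriented between each pair other than {v, w'}:
      (∀ e e', π e ≠ none → π e' ≠ none → samePair ends e e' →
        e ≠ e' → e ∈ edgesBetween ends v w') :=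
  stmt8_general ends heavy α β hβ hαβ w hw K hconn hmax hnonodd
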